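/- (Appendix, Case 1: decodability of R_1) Let k ≥ 2, F_q a finite field, W = F_q^{2k}, and let P_{i,j} ∈ W (i ∈ {1,…,k+2}, j ∈ {1,2}) satisfy the initial Reed–Solomon property that any 2k of them are linearly independent. Since the 2k vectors {P_{i,j} : 2 ≤ i ≤ k+1, j = 1,2} form a basis of W, let λ^{(k+2)}_{i,j} ∈ F_q be the unique coefficients with P_{k+2,1} = Σ_{i=2}^{k+1} Σ_{j=1}^{2} λ^{(k+2)}_{i,j} P_{i,j}. Let γ_{i,2} ∈ F_q for i ∈ {2,…,k+2} and set P′_{1,2} = Σ_{i=2}^{k+2} γ_{i,2} P_{i,1}. If γ_{k+1,2} + γ_{k+2,2} λ^{(k+2)}_{k+1,1} ≠ 0, then the 2k vectors {P′_{1,2}} ∪ {P_{i,1}, P_{i,2} : 2 ≤ i ≤ k} ∪ {P_{k+1,2}} are linearly independent. -/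
import Mathlib


/-- A collection of chunks (indexed by node number × chunk-position, chunk-position
`0` standing for the paper's chunk 1 and `1` for chunk 2) is decodable if the
corresponding vectors in `W = Fq^{2k}` are linearly independent. -/
def Decodable {d : ℕ} {Fq : Type*} [Field Fq]
    (P : ℕ → Fin 2 → Fin d → Fq) (C : Finset (ℕ × Fin 2)) : Prop :=
  LinearIndependent Fq (fun x : {y // y ∈ C} => P x.1.1 x.1.2)

lemma decodable_iff {d : ℕ} {Fq : Type*} [Field Fq]
    (P : ℕ → Fin 2 → Fin d → Fq) (C : Finset (ℕ × Fin 2)) :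
    Decodable P C ↔ ∀ g : ℕ × Fin 2 → Fq,
      ∑ p ∈ C, g p • P p.1 p.2 = 0 → ∀ p ∈ C, g p = 0 := by
  rw [Decodable, Fintype.linearIndependent_iff]
  constructor
  · intro h g hg p hp
    exact h (fun x => g x.1)
      (by rw [← Finset.sum_coe_sort C (fun p => g p • P p.1 p.2)] at hg; exact hg) ⟨p, hp⟩
  · intro h g hg x
    have := h (fun p => if hp : p ∈ C then g ⟨p, hp⟩ else 0) ?_ x.1 x.2
    · simpa [x.2] using this
    · rw [← Finset.sum_coe_sort C
        (fun p => (if hp : p ∈ C then g ⟨p, hp⟩ else 0) • P p.1 p.2), ← hg]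
      apply Finset.sum_congr rfl
      intro y _
      simp [y.2]

/-- Appendix, Case 1: decodability of `R₁`: with the initial
Reed–Solomon property, coefficients `λ^{(k+2)}_{i,j}` expressing
`P_{k+2,1} = Σ_{i=2}^{k+1} Σ_{j=1}^{2} λ^{(k+2)}_{i,j} P_{i,j}` (these coefficients
are unique since `{P_{i,j} : 2 ≤ i ≤ k+1}` is a basis of `W`), and
`P′_{1,2} = Σ_{i=2}^{k+2} γ_{i,2} P_{i,1}`, if
`γ_{k+1,2} + γ_{k+2,2} λ^{(k+2)}_{k+1,1} ≠ 0`, then the `2k` vectors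
`{P′_{1,2}} ∪ {P_{i,1}, P_{i,2} : 2 ≤ i ≤ k} ∪ {P_{k+1,2}}` are linearly
independent. -/
theorem stmt9 (k : ℕ) (hk : 2 ≤ k) (Fq : Type*) [Field Fq]
    (P : ℕ → Fin 2 → Fin (2 * k) → Fq)
    (hRS : ∀ C : Finset (ℕ × Fin 2), C ⊆ Finset.Icc 1 (k + 2) ×ˢ Finset.univ →
      C.card = 2 * k → Decodable P C)
    (lam : ℕ → Fin 2 → Fq)
    (hlam : P (k + 2) 0 = ∑ i ∈ Finset.Icc 2 (k + 1), ∑ j : Fin 2, lam i j • P i j)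
    (γ : ℕ → Fq)
    (P'2 : Fin (2 * k) → Fq)
    (hP' : P'2 = ∑ i ∈ Finset.Icc 2 (k + 2), γ i • P i 0)
    (hγ : γ (k + 1) + γ (k + 2) * lam (k + 1) 0 ≠ 0) :
    Decodable (fun i j => if i = 1 then P'2 else P i j)
      (insert ((1 : ℕ), (1 : Fin 2))
        ((Finset.Icc 2 k ×ˢ Finset.univ) ∪ {((k + 1 : ℕ), (1 : Fin 2))})) := by
  set C0 : Finset (ℕ × Fin 2) := Finset.Icc 2 (k + 1) ×ˢ Finset.univ with hC0
  set T : Finset (ℕ × Fin 2) :=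
    (Finset.Icc 2 k ×ˢ Finset.univ) ∪ {((k + 1 : ℕ), (1 : Fin 2))} with hT
  have hC0card : C0.card = 2 * k := by
    rw [hC0, Finset.card_product, Nat.card_Icc]
    simp
    omega
  have hC0sub : C0 ⊆ Finset.Icc 1 (k + 2) ×ˢ Finset.univ := by
    intro p hp
    simp only [hC0, Finset.mem_product, Finset.mem_Icc, Finset.mem_univ, and_true] at hp ⊢
    omega
  have hkey := (decodable_iff P C0).mp (hRS C0 hC0sub hC0card)
  have hTsub : T ⊆ C0 := by
    intro p hp
    simp only [hT, Finset.mem_union, Finset.mem_product, Finset.mem_Icc,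
      Finset.mem_univ, and_true, Finset.mem_singleton] at hp
    simp only [hC0, Finset.mem_product, Finset.mem_Icc, Finset.mem_univ, and_true]
    rcases hp with h | h
    · omega
    · rw [h]; omega
  have h11T : ((1 : ℕ), (1 : Fin 2)) ∉ T := by
    intro h
    have := hTsub h
    simp only [hC0, Finset.mem_product, Finset.mem_Icc] at this
    omega
  rw [decodable_iff]
  intro g hg
  rw [Finset.sum_insert h11T] at hg
  have hg' : g ((1 : ℕ), (1 : Fin 2)) • P'2 + ∑ p ∈ T, g p • P p.1 p.2 = 0 := by
    have h2 : ∑ x ∈ T, g x • (if x.1 = 1 then P'2 else P x.1 x.2)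
        = ∑ p ∈ T, g p • P p.1 p.2 := by
      refine Finset.sum_congr rfl fun p hp => ?_
      have hp1 : 2 ≤ p.1 := by
        have := hTsub hp
        simp only [hC0, Finset.mem_product, Finset.mem_Icc] at this
        exact this.1.1
      rw [if_neg (by omega : p.1 ≠ 1)]
    simp only [h2] at hg
    simpa using hg
  have hP'sum : P'2 = ∑ i ∈ Finset.Icc 2 (k + 1), γ i • P i 0 + γ (k + 2) • P (k + 2) 0 := by
    rw [hP', show k + 2 = (k + 1) + 1 from rfl,
      Finset.sum_Icc_succ_top (by omega : 2 ≤ (k + 1) + 1)]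
  have hcoeff : ∑ p ∈ C0,
      ((if p.2 = 0 then γ p.1 else 0) + γ (k + 2) * lam p.1 p.2) • P p.1 p.2 = P'2 := by
    rw [hP'sum, hlam, hC0, Finset.sum_product]
    simp only [add_smul, Finset.sum_add_distrib]
    congr 1
    · apply Finset.sum_congr rfl
      intro i _
      rw [Fin.sum_univ_two]
      simp
    · rw [Finset.smul_sum]
      apply Finset.sum_congr rfl
      intro i _
      rw [Finset.smul_sum]
      apply Finset.sum_congr rfl
      intro j _
      rw [mul_smul]
  have hmain : ∑ p ∈ C0,
      (g ((1 : ℕ), (1 : Fin 2)) * ((if p.2 = 0 then γ p.1 else 0) + γ (k + 2) * lam p.1 p.2)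
        + (if p ∈ T then g p else 0)) • P p.1 p.2 = 0 := by
    calc ∑ p ∈ C0,
        (g ((1 : ℕ), (1 : Fin 2)) * ((if p.2 = 0 then γ p.1 else 0) + γ (k + 2) * lam p.1 p.2)
          + (if p ∈ T then g p else 0)) • P p.1 p.2
        = g ((1 : ℕ), (1 : Fin 2)) •
            (∑ p ∈ C0, ((if p.2 = 0 then γ p.1 else 0) + γ (k + 2) * lam p.1 p.2) • P p.1 p.2)
          + ∑ p ∈ C0, (if p ∈ T then g p • P p.1 p.2 else 0) := by
          rw [Finset.smul_sum]
          rw [← Finset.sum_add_distrib]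
          apply Finset.sum_congr rfl
          intro p _
          rw [add_smul, mul_smul, ite_smul, zero_smul]
      _ = g ((1 : ℕ), (1 : Fin 2)) • P'2 + ∑ p ∈ T, g p • P p.1 p.2 := by
          rw [hcoeff, Finset.sum_ite_mem, Finset.inter_eq_right.mpr hTsub]
      _ = 0 := hg'
  have hall := hkey _ hmain
  have hk10C0 : ((k + 1 : ℕ), (0 : Fin 2)) ∈ C0 := by
    simp only [hC0, Finset.mem_product, Finset.mem_Icc, Finset.mem_univ, and_true]
    omega
  have hk10T : ((k + 1 : ℕ), (0 : Fin 2)) ∉ T := by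
    simp only [hT, Finset.mem_union, Finset.mem_product, Finset.mem_Icc,
      Finset.mem_univ, and_true, Finset.mem_singleton, Prod.mk.injEq]
    push_neg
    constructor
    · omega
    · intro _
      decide
  have hg11 : g ((1 : ℕ), (1 : Fin 2)) = 0 := by
    have h0 := hall _ hk10C0
    simp only [if_pos rfl, if_neg hk10T, add_zero] at h0
    rcases mul_eq_zero.mp h0 with h | h
    · exact h
    · exact absurd h hγ
  intro p hp
  rcases Finset.mem_insert.mp hp with h | h
  · rw [h]; exact hg11
  · have h0 := hall p (hTsub h)
    rw [hg11, zero_mul, zero_add, if_pos h] at h0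
    exact h0
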